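/- arXiv:2605.11943 — 4 statements merged into one kernel-verified Lean document; each statement's English description precedes it below -/
import Mathlib

section
/- Let R₀ be a commutative Noetherian ring and R = ⊕_{n≥0} R_n a standard graded R₀-algebra which is flat as an R₀-module via the inclusion R₀ ↪ R. If E = ⊕_{n∈ℤ} E_n is an injective object in the category of graded R-modules, then each graded component E_n is an injective R₀-module. -/
open CategoryTheory Opposite

noncomputable section

universe u

namespace Paper

variable {R₀ : Type u} [CommRing R₀]

/-- The dimension over `R₀/I` of an `I`-torsion `R₀`-module `X`,
realised as `finrank_{R₀/I} (X/IX)`. -/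
def vdim (I : Ideal R₀) (X : Type u) [AddCommGroup X] [Module R₀ X] : ℕ :=
  Module.finrank (R₀ ⧸ I) (X ⧸ (I • (⊤ : Submodule R₀ X)))

/-- Cardinal-valued version of `vdim`. -/
def vrank (I : Ideal R₀) (X : Type u) [AddCommGroup X] [Module R₀ X] : Cardinal.{u} :=
  Module.rank (R₀ ⧸ I) (X ⧸ (I • (⊤ : Submodule R₀ X)))

/-- `Ext^i_{R₀}(R₀/I, X)`. -/
def extQuot (I : Ideal R₀) (i : ℕ) (X : Type u) [AddCommGroup X] [Module R₀ X] :
    ModuleCat.{u} R₀ :=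
  ((Ext R₀ (ModuleCat.{u} R₀) i).obj (op (ModuleCat.of R₀ (R₀ ⧸ I)))).obj (ModuleCat.of R₀ X)

/-- The `i`-th Bass number `μ^i(I, X)` with respect to a maximal ideal `I`
(as an element of `ℕ`). -/
def bass (I : Ideal R₀) (i : ℕ) (X : Type u) [AddCommGroup X] [Module R₀ X] : ℕ :=
  vdim I (extQuot I i X)

/-- Cardinal valued Bass number. -/
def bassC (I : Ideal R₀) (i : ℕ) (X : Type u) [AddCommGroup X] [Module R₀ X] : Cardinal.{u} :=
  vrank I (extQuot I i X)

/-- `dim_{κ(𝔭)} (X_𝔭)` for an `R₀`-module `X` whose localization is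
killed by `𝔭 (R₀)_𝔭`. -/
def vdimLoc (𝔭 : Ideal R₀) [𝔭.IsPrime] (X : Type u) [AddCommGroup X] [Module R₀ X] :
    Cardinal.{u} :=
  vrank (Ideal.map (algebraMap R₀ (Localization.AtPrime 𝔭)) 𝔭)
    (LocalizedModule 𝔭.primeCompl X)

/-- Bass number `μ^i(𝔭, X) = dim_{κ(𝔭)} (Ext^i_{R₀}(R₀/𝔭, X))_𝔭`. -/
def bassLoc (𝔭 : Ideal R₀) [𝔭.IsPrime] (i : ℕ) (X : Type u) [AddCommGroup X] [Module R₀ X] :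
    Cardinal.{u} :=
  vdimLoc 𝔭 (extQuot 𝔭 i X)

section Graded

variable (R : Type u) [CommRing R] [Algebra R₀ R] (𝒜 : ℕ → Submodule R₀ R) [GradedAlgebra 𝒜]

/-- The irrelevant ideal `R₊` of a graded ring. -/
def irr : Ideal R := (HomogeneousIdeal.irrelevant 𝒜).toIdeal

variable (R₀) in
/-- `R` is a *standard* graded `R₀`-algebra: `R₀` is the degree-zero part, it embeds in `R`,
and `R` is generated over `R₀` by finitely many elements of degree `1`. -/
structure IsStdGraded : Prop where
  adjoin_one : Algebra.adjoin R₀ (𝒜 1 : Set R) = ⊤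
  fg_one : (𝒜 1).FG
  inj : Function.Injective (algebraMap R₀ R)
  degree_zero : 𝒜 0 = LinearMap.range (Algebra.linearMap R₀ R)

/-- `ℳ` is a (ℤ-indexed) grading making `M` a graded module over the graded ring `(R, 𝒜)`. -/
structure IsGradedMod (M : Type u) [AddCommGroup M] [Module R₀ M] [Module R M]
    [IsScalarTower R₀ R M] (ℳ : ℤ → Submodule R₀ M) : Prop where
  internal : DirectSum.IsInternal ℳ
  smul_mem : ∀ (i : ℕ) (n : ℤ) (r : R) (m : M), r ∈ 𝒜 i → m ∈ ℳ n → r • m ∈ ℳ (n + (i : ℤ))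

/-- The scalar action of `R` transported to the restriction of scalars. -/
def rsmul {X : Type u} [AddCommGroup X] [Module R X] (r : R) (x : RestrictScalars R₀ R X) :
    RestrictScalars R₀ R X :=
  (RestrictScalars.addEquiv R₀ R X).symm (r • (RestrictScalars.addEquiv R₀ R X x))

/-- `ℋ` is a grading making the `R`-module `X` (viewed over `R₀` by restriction of scalars)
a graded module over the graded ring `(R, 𝒜)`. -/
structure IsGradedRes (X : Type u) [AddCommGroup X] [Module R X]
    (ℋ : ℤ → Submodule R₀ (RestrictScalars R₀ R X)) : Prop where
  internal : DirectSum.IsInternal ℋ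
  smul_mem : ∀ (i : ℕ) (n : ℤ) (r : R) (x : RestrictScalars R₀ R X),
    r ∈ 𝒜 i → x ∈ ℋ n → rsmul R r x ∈ ℋ (n + (i : ℤ))

/-- The local cohomology module `H^j_I(M)`. -/
def lc (I : Ideal R) (j : ℕ) (M : Type u) [AddCommGroup M] [Module R M] : ModuleCat.{u} R :=
  (localCohomology I j).obj (ModuleCat.of R M)

/-- The diagram `t ↦ J + I^t` of ideals of `R`. -/
def sumPowers (J I : Ideal R) : ℕᵒᵖ ⥤ Ideal R where
  obj t := J ⊔ I ^ (unop t)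
  map w := ⟨⟨sup_le_sup_left (Ideal.pow_le_pow_right w.unop.down.down) J⟩⟩

/-- The generalized local cohomology module `H^j_I(R/J, M) = colim_t Ext^j_R(R/(J + I^t), M)`. -/
def glcQuot (J I : Ideal R) (j : ℕ) (M : Type u) [AddCommGroup M] [Module R M] :
    ModuleCat.{u} R :=
  (localCohomology.ofDiagram (sumPowers R J I) j).obj (ModuleCat.of R M)

/-- The cohomological dimension `cd_I(M)` (as an extended natural number). -/
def cd (I : Ideal R) (M : Type u) [AddCommGroup M] [Module R M] : ℕ∞ :=
  sSup {c : ℕ∞ | ∃ i : ℕ, c = i ∧ Nontrivial (lc R I i M)}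

/-- The finiteness dimension `f_I(M)` (as an extended natural number). -/
def fdim (I : Ideal R) (M : Type u) [AddCommGroup M] [Module R M] : ℕ∞ :=
  sInf {c : ℕ∞ | ∃ i : ℕ, c = i ∧ ¬ Module.Finite R (lc R I i M)}

/-- The `I`-torsion submodule `Γ_I(M)`. -/
def torsionSub (I : Ideal R) (M : Type u) [AddCommGroup M] [Module R M] : Submodule R M :=
  ⨆ t : ℕ, Submodule.torsionBySet R M ((I ^ t : Ideal R) : Set R)


end Graded

end Paper

/-!
Let `f : X → Y` be injective and `g : X → Eₙ` be `R₀`-linear. By flatness `R ⊗ f` is injective,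
and grading `R ⊗ X`, `R ⊗ Y` so that `r ⊗ x` has degree `n + deg r` makes `R ⊗ f` and the
`R`-linear extension `R ⊗ X → E` of `g` homogeneous of degree zero. Graded injectivity of `E`
extends the latter along `R ⊗ f`, and restricting the extension to `1 ⊗ Y` extends `g`.
-/

open scoped TensorProduct

theorem Function.extend_bot_le_iff {ι κ α : Type*} [CompleteLattice α] {e : ι → κ}
    (he : Function.Injective e) (A : ι → α) (k : κ) (a : α) :
    Function.extend e A ⊥ k ≤ a ↔ ∀ i, e i = k → A i ≤ a := by
  by_cases hk : ∃ i, e i = k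
  · obtain ⟨i, rfl⟩ := hk
    simp only [he.extend_apply, he.eq_iff, forall_eq]
  · simp only [Function.extend_apply' _ _ _ hk, Pi.bot_apply, bot_le, true_iff]
    exact fun i hi => absurd ⟨i, hi⟩ hk

theorem DirectSum.IsInternal.extend_bot {ι κ R M : Type*} [DecidableEq ι] [DecidableEq κ]
    [Ring R] [AddCommGroup M] [Module R M] {A : ι → Submodule R M} (hA : IsInternal A)
    {e : ι → κ} (he : Function.Injective e) : IsInternal (Function.extend e A ⊥) := by
  rw [isInternal_submodule_iff_iSupIndep_and_iSup_eq_top]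
  refine ⟨fun k => ?_, by rw [iSup_extend_bot he, hA.submodule_iSup_eq_top]⟩
  by_cases hk : ∃ i, e i = k
  · obtain ⟨i, rfl⟩ := hk
    rw [he.extend_apply]
    refine (hA.submodule_iSupIndep i).mono_right (iSup₂_le fun k hk => ?_)
    refine (Function.extend_bot_le_iff he A k _).2 fun j hj => ?_
    exact le_iSup₂_of_le j (fun hji => hk (hji ▸ hj.symm)) le_rfl
  · simp [Function.extend_apply' _ _ _ hk]

theorem DirectSum.decomposeTensor_le_iff {ι R M N : Type*} [CommRing R] [AddCommGroup M]
    [Module R M] [AddCommGroup N] [Module R N] (ℳ : ι → Submodule R M) (i : ι)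
    (P : Submodule R (M ⊗[R] N)) :
    decomposeTensor ℳ N i ≤ P ↔ ∀ m ∈ ℳ i, ∀ x : N, m ⊗ₜ[R] x ∈ P := by
  refine ⟨fun h m hm x => h ⟨⟨m, hm⟩ ⊗ₜ x, rfl⟩, fun h => ?_⟩
  rintro _ ⟨t, rfl⟩
  induction t using TensorProduct.induction_on with
  | zero => simp
  | tmul m x => exact h m m.2 x
  | add s t hs ht => rw [map_add]; exact add_mem hs ht

namespace Paper

section TensorGrading

open DirectSum

variable {R₀ R : Type u} [CommRing R₀] [CommRing R] [Algebra R₀ R] (𝒜 : ℕ → Submodule R₀ R)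
  (N : Type u) [AddCommGroup N] [Module R₀ N]

/-- The grading of `R ⊗[R₀] N` in which `r ⊗ x` has degree `n + deg r` (and which vanishes in
degrees below `n`). -/
def tensorGrading (n : ℤ) : ℤ → Submodule R₀ (R ⊗[R₀] N) :=
  Function.extend (fun k : ℕ => n + k) (decomposeTensor 𝒜 N) ⊥

theorem injective_add_natCast (n : ℤ) : Function.Injective (fun k : ℕ => n + k) :=
  (add_right_injective n).comp Nat.cast_injective

variable {𝒜 N} in
theorem tensorGrading_le_iff {n m : ℤ} {P : Submodule R₀ (R ⊗[R₀] N)} :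
    tensorGrading 𝒜 N n m ≤ P ↔ ∀ k : ℕ, n + k = m → ∀ r ∈ 𝒜 k, ∀ x : N, r ⊗ₜ[R₀] x ∈ P := by
  simp only [tensorGrading, Function.extend_bot_le_iff (injective_add_natCast n),
    decomposeTensor_le_iff]

theorem tmul_mem_tensorGrading (n : ℤ) {k : ℕ} {r : R} (hr : r ∈ 𝒜 k) (x : N) :
    r ⊗ₜ[R₀] x ∈ tensorGrading 𝒜 N n (n + k) := by
  rw [tensorGrading, (injective_add_natCast n).extend_apply]
  exact ⟨⟨r, hr⟩ ⊗ₜ x, rfl⟩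

theorem isGradedMod_tensorGrading [GradedAlgebra 𝒜] (n : ℤ) :
    IsGradedMod R 𝒜 (R ⊗[R₀] N) (tensorGrading 𝒜 N n) := by
  classical
  refine ⟨?_, fun i m r z hr hz => ?_⟩
  · let := tensorDecomposition 𝒜 N
    exact (Decomposition.isInternal _).extend_bot (injective_add_natCast n)
  · have : tensorGrading 𝒜 N n m ≤
        (tensorGrading 𝒜 N n (m + i)).comap
          ((LinearMap.lsmul R (R ⊗[R₀] N) r).restrictScalars R₀) := by
      refine tensorGrading_le_iff.2 fun k hk s hs x => ?_
      have := tmul_mem_tensorGrading 𝒜 N n (SetLike.mul_mem_graded hr hs) x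
      rwa [Nat.cast_add, ← add_assoc, add_right_comm, hk, ← smul_eq_mul,
        ← TensorProduct.smul_tmul'] at this
    exact this hz

variable {N}

theorem baseChange_mem_tensorGrading {N' : Type u} [AddCommGroup N'] [Module R₀ N']
    (f : N →ₗ[R₀] N') {n m : ℤ} {z : R ⊗[R₀] N} (hz : z ∈ tensorGrading 𝒜 N n m) :
    f.baseChange R z ∈ tensorGrading 𝒜 N' n m := by
  have : tensorGrading 𝒜 N n m ≤
      (tensorGrading 𝒜 N' n m).comap ((f.baseChange R).restrictScalars R₀) :=
    tensorGrading_le_iff.2 fun k hk r hr x => hk ▸ tmul_mem_tensorGrading 𝒜 N' n hr (f x)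
  exact this hz

theorem liftBaseChange_mem_of_isGradedMod [GradedAlgebra 𝒜] {M : Type u} [AddCommGroup M]
    [Module R₀ M] [Module R M] [IsScalarTower R₀ R M] {ℳ : ℤ → Submodule R₀ M}
    (hM : IsGradedMod R 𝒜 M ℳ) {n m : ℤ}
    (f : N →ₗ[R₀] M) (hf : ∀ x, f x ∈ ℳ n) {z : R ⊗[R₀] N} (hz : z ∈ tensorGrading 𝒜 N n m) :
    f.liftBaseChange R z ∈ ℳ m := by
  have : tensorGrading 𝒜 N n m ≤ (ℳ m).comap ((f.liftBaseChange R).restrictScalars R₀) :=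
    tensorGrading_le_iff.2 fun k hk r hr x => by
      simpa [← hk] using hM.smul_mem k n r (f x) hr (hf x)
  exact this hz

end TensorGrading

theorem statement0_general (R₀ : Type u) [CommRing R₀]
    (R : Type u) [CommRing R] [Algebra R₀ R] [Module.Flat R₀ R]
    (𝒜 : ℕ → Submodule R₀ R) [GradedAlgebra 𝒜]
    (E : Type u) [AddCommGroup E] [Module R₀ E] [Module R E] [IsScalarTower R₀ R E]
    (ℰ : ℤ → Submodule R₀ E) (hE : IsGradedMod R 𝒜 E ℰ)
    (hinj : ∀ (A : Type u) [AddCommGroup A] [Module R₀ A] [Module R A] [IsScalarTower R₀ R A]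
      (B : Type u) [AddCommGroup B] [Module R₀ B] [Module R B] [IsScalarTower R₀ R B]
      (𝒜A : ℤ → Submodule R₀ A) (ℬ : ℤ → Submodule R₀ B),
      IsGradedMod R 𝒜 A 𝒜A → IsGradedMod R 𝒜 B ℬ →
      ∀ ι : A →ₗ[R] B, Function.Injective ι → (∀ n : ℤ, ∀ a ∈ 𝒜A n, ι a ∈ ℬ n) →
      ∀ φ : A →ₗ[R] E, (∀ n : ℤ, ∀ a ∈ 𝒜A n, φ a ∈ ℰ n) →
      ∃ ψ : B →ₗ[R] E, (∀ n : ℤ, ∀ b ∈ ℬ n, ψ b ∈ ℰ n) ∧ ψ.comp ι = φ) :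
    ∀ n : ℤ, Module.Injective R₀ ↥(ℰ n) := by
  intro n
  refine ⟨fun X Y _ _ _ _ f hf g => ?_⟩
  have hfR : Function.Injective (f.baseChange R) := by
    rw [LinearMap.baseChange_eq_ltensor]
    exact Module.Flat.lTensor_preserves_injective_linearMap f hf
  obtain ⟨ψ, hψ, hψf⟩ := hinj _ _ _ _ (isGradedMod_tensorGrading 𝒜 X n)
    (isGradedMod_tensorGrading 𝒜 Y n) (f.baseChange R) hfR
    (fun _ _ => baseChange_mem_tensorGrading 𝒜 f) (((ℰ n).subtype ∘ₗ g).liftBaseChange R)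
    (fun _ _ => liftBaseChange_mem_of_isGradedMod 𝒜 hE _ fun x => (g x).2)
  have hψ_one : ∀ y : Y, ψ ((1 : R) ⊗ₜ[R₀] y) ∈ ℰ n := fun y =>
    hψ n _ (by simpa using tmul_mem_tensorGrading 𝒜 Y n (SetLike.one_mem_graded 𝒜) y)
  refine ⟨((ψ.restrictScalars R₀) ∘ₗ TensorProduct.mk R₀ R Y 1).codRestrict (ℰ n) hψ_one,
    fun x => Subtype.ext ?_⟩
  show ψ (1 ⊗ₜ f x) = g x
  simpa using LinearMap.congr_fun hψf ((1 : R) ⊗ₜ[R₀] x)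

/-- If `R` is a standard graded `R₀`-algebra, flat over the Noetherian base
ring `R₀`, and `E = ⊕ₙ Eₙ` is an injective object of the category of graded `R`-modules (i.e.
every degree-zero homomorphism into `E` from a graded submodule extends), then each component
`Eₙ` is an injective `R₀`-module. -/
theorem statement0 (R₀ : Type u) [CommRing R₀] [IsNoetherianRing R₀]
    (R : Type u) [CommRing R] [Algebra R₀ R] [Module.Flat R₀ R]
    (𝒜 : ℕ → Submodule R₀ R) [GradedAlgebra 𝒜] (hstd : IsStdGraded R₀ R 𝒜)
    (E : Type u) [AddCommGroup E] [Module R₀ E] [Module R E] [IsScalarTower R₀ R E]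
    (ℰ : ℤ → Submodule R₀ E) (hE : IsGradedMod R 𝒜 E ℰ)
    (hinj : ∀ (A : Type u) [AddCommGroup A] [Module R₀ A] [Module R A] [IsScalarTower R₀ R A]
      (B : Type u) [AddCommGroup B] [Module R₀ B] [Module R B] [IsScalarTower R₀ R B]
      (𝒜A : ℤ → Submodule R₀ A) (ℬ : ℤ → Submodule R₀ B),
      IsGradedMod R 𝒜 A 𝒜A → IsGradedMod R 𝒜 B ℬ →
      ∀ ι : A →ₗ[R] B, Function.Injective ι → (∀ n : ℤ, ∀ a ∈ 𝒜A n, ι a ∈ ℬ n) →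
      ∀ φ : A →ₗ[R] E, (∀ n : ℤ, ∀ a ∈ 𝒜A n, φ a ∈ ℰ n) →
      ∃ ψ : B →ₗ[R] E, (∀ n : ℤ, ∀ b ∈ ℬ n, ψ b ∈ ℰ n) ∧ ψ.comp ι = φ) :
    ∀ n : ℤ, Module.Injective R₀ ↥(ℰ n) :=
  statement0_general R₀ R 𝒜 E ℰ hE hinj

end Paper
end
end

section
/- Let S be a commutative ring and X an S-module. Then X is finitely generated if and only if for every direct system (M_i)_{i∈Λ} of S-modules with injective transition maps, the natural homomorphism colim Hom_S(X, M_i) → Hom_S(X, colim M_i) is an isomorphism. -/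
/-!
A map from a finitely generated module into a direct limit has finitely generated image, and a
finitely generated submodule of a directed union already lies in one member, here the image of a
single stage. When the transition maps are injective every stage embeds in the limit, so the map
factors through that stage, and distinct maps into a stage stay distinct in the limit.
Conversely, a module is the direct limit of its finitely generated submodules along inclusions;
lifting the identity through the comparison map factors it through one of them, which must then
be the whole module.
-/

open CategoryTheory Opposite

noncomputable section

universe u

theorem LinearMap.exists_comp_eq_of_range_le {R M N P : Type*} [Semiring R] [AddCommMonoid M]
    [AddCommMonoid N] [AddCommMonoid P] [Module R M] [Module R N] [Module R P]
    {g : N →ₗ[R] P} (hg : Function.Injective g) {h : M →ₗ[R] P} (hr : range h ≤ range g) :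
    ∃ k : M →ₗ[R] N, g ∘ₗ k = h :=
  ⟨(LinearEquiv.ofInjective g hg).symm ∘ₗ h.codRestrict _ fun x => hr (mem_range_self h x),
    ext fun x => by simp⟩

namespace Module.DirectLimit

section Semiring

variable {R ι : Type*} [Semiring R] [Preorder ι] [DecidableEq ι] {G : ι → Type*}
  [∀ i, AddCommMonoid (G i)] [∀ i, Module R (G i)] {f : ∀ i j, i ≤ j → G i →ₗ[R] G j}

theorem range_of_mono : Monotone fun i => LinearMap.range (of R ι G f i) := by
  rintro i j hij _ ⟨x, rfl⟩
  exact ⟨f i j hij x, of_f⟩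

theorem exists_le_range_of [IsDirectedOrder ι] [Nonempty ι] {N : Submodule R (DirectLimit G f)}
    (hN : N.FG) : ∃ i, N ≤ LinearMap.range (of R ι G f i) := by
  have hsup : ⨆ i, LinearMap.range (of R ι G f i) = ⊤ :=
    eq_top_iff.2 fun z _ => by
      obtain ⟨i, x, rfl⟩ := exists_of z
      exact Submodule.mem_iSup_of_mem i (LinearMap.mem_range_self _ x)
  obtain ⟨_, ⟨i, rfl⟩, hi⟩ := (CompleteLattice.isCompactElement_iff_le_of_directed_sSup_le _ _).1
    ((Submodule.fg_iff_compact N).1 hN) _ (Set.range_nonempty _)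
    (directedOn_range.2 range_of_mono.directed_le) (by rw [sSup_range, hsup]; exact le_top)
  exact ⟨i, hi⟩

theorem of_injective [DirectedSystem G (f · · ·)] [IsDirectedOrder ι]
    (hf : ∀ i j hij, Function.Injective (f i j hij)) (i : ι) :
    Function.Injective (of R ι G f i) := fun x y hxy => by
  obtain ⟨j, hij, h⟩ := exists_eq_of_of_eq hxy
  exact hf i j hij h

end Semiring

variable {R ι : Type*} [CommSemiring R] [Preorder ι] [DecidableEq ι]
  {X : Type*} [AddCommMonoid X] [Module R X] {G : ι → Type*}
  [∀ i, AddCommMonoid (G i)] [∀ i, Module R (G i)] {f : ∀ i j, i ≤ j → G i →ₗ[R] G j}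

variable (R X f) in
def limitHomToHomLimit :
    DirectLimit (fun i => X →ₗ[R] G i) (fun i j hij => LinearMap.llcomp R X _ _ (f i j hij)) →ₗ[R]
      X →ₗ[R] DirectLimit G f :=
  lift R ι _ _ (fun i => LinearMap.llcomp R X _ _ (of R ι G f i))
    fun _ _ _ _ => LinearMap.ext fun _ => of_f

@[simp]
theorem limitHomToHomLimit_of (i : ι) (g : X →ₗ[R] G i) :
    limitHomToHomLimit R X f (of R ι _ _ i g) = of R ι G f i ∘ₗ g :=
  lift_of ..

variable [DirectedSystem G (f · · ·)] [IsDirectedOrder ι]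

theorem limitHomToHomLimit_injective (hf : ∀ i j hij, Function.Injective (f i j hij)) :
    Function.Injective (limitHomToHomLimit R X f) :=
  lift_injective _ _ fun i _ _ h => (LinearMap.cancel_left (of_injective hf i)).mp h

theorem limitHomToHomLimit_surjective [Nonempty ι] [Module.Finite R X]
    (hf : ∀ i j hij, Function.Injective (f i j hij)) :
    Function.Surjective (limitHomToHomLimit R X f) := fun h => by
  obtain ⟨i, hi⟩ := exists_le_range_of (Submodule.fg_range h)
  obtain ⟨g, rfl⟩ := LinearMap.exists_comp_eq_of_range_le (of_injective hf i) hi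
  exact ⟨of R ι _ _ i g, limitHomToHomLimit_of i g⟩

end Module.DirectLimit

namespace Module.fgSystem

variable {R M : Type*} [CommSemiring R] [AddCommMonoid M] [Module R M]
  [DecidableEq (Submodule R M)]

theorem finite_of_surjective_limitHomToHomLimit
    (h : Function.Surjective (DirectLimit.limitHomToHomLimit R M (fgSystem R M))) :
    Module.Finite R M := by
  obtain ⟨z, hz⟩ := h (equiv R M).symm.toLinearMap
  obtain ⟨N, g, rfl⟩ := DirectLimit.exists_of z
  rw [DirectLimit.limitHomToHomLimit_of] at hz
  have hNg : N.1.subtype ∘ₗ g = LinearMap.id := by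
    rw [← equiv_comp_of, LinearMap.comp_assoc, hz]; exact (equiv R M).comp_symm
  have hN : N.1 = ⊤ := eq_top_iff.2 fun x _ => by
    have hx : (g x : M) = x := congr($hNg x)
    exact hx ▸ (g x).2
  exact ⟨hN ▸ N.2⟩

end Module.fgSystem

namespace Paper

/-- An `S`-module `X` is finitely generated if and only if for every direct
system `(M_i)` of `S`-modules with injective transition maps, the natural homomorphism
`colim Hom_S(X, M_i) → Hom_S(X, colim M_i)` is an isomorphism. -/
theorem statement2 (S : Type u) [CommRing S] (X : Type u) [AddCommGroup X] [Module S X] :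
    Module.Finite S X ↔
      ∀ (Λ : Type u) [Preorder Λ] [IsDirected Λ (· ≤ ·)] [Nonempty Λ] [DecidableEq Λ]
        (Mi : Λ → Type u) [∀ i, AddCommGroup (Mi i)] [∀ i, Module S (Mi i)]
        (f : ∀ i j, i ≤ j → Mi i →ₗ[S] Mi j) [DirectedSystem Mi (fun i j h => f i j h)],
        (∀ i j h, Function.Injective (f i j h)) →
        Function.Bijective
          (Module.DirectLimit.lift S Λ (fun i => X →ₗ[S] Mi i)
            (fun i j h => LinearMap.llcomp S X (Mi i) (Mi j) (f i j h))
            (fun i => LinearMap.llcomp S X (Mi i) (Module.DirectLimit Mi f)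
              (Module.DirectLimit.of S Λ Mi f i))
            (by intro i j hij g
                ext y
                simp [Module.DirectLimit.of_f])) := by
  classical
  constructor
  · intro _ Λ _ _ _ _ Mi _ _ f _ hf
    exact ⟨Module.DirectLimit.limitHomToHomLimit_injective hf,
      Module.DirectLimit.limitHomToHomLimit_surjective hf⟩
  · intro H
    exact Module.fgSystem.finite_of_surjective_limitHomToHomLimit
      (H _ _ (Module.fgSystem S X) fun _ _ h => Submodule.inclusion_injective h).2

end Paper
end
end

section
/- Let R be a standard graded Noetherian ring and N a graded R-module. Then N is a Noetherian R-module if and only if there exist integers t ≤ s such that: N_n = 0 for all n < t; N_{n+1} = R₁·N_n for all n ≥ s; and N_n is a finitely generated R₀-module for all t ≤ n ≤ s. -/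
/-!
If `Q ≤ 𝒩` is a family of `R₀`-submodules stable under multiplication by homogeneous elements
of `R`, then `⨆ Q` is an `R`-submodule whose degree-`k` part is `Q k`. A Noetherian `N` is
generated by finitely many homogeneous elements, of degrees in some `[t, s]`. Taking for `Q` the
truncation of `𝒩` below `t`, resp. `𝒩` with `Nₙ` replaced by `R₁ Nₙ₋₁` above `s` (stable since
`R_{j+1} = R₁ R_j`), resp. the `R₀`-span of `Rᵢ T` in degree `n + i` for a finite `T ⊆ Nₙ`
generating `R Nₙ`, gives the three conditions. Conversely, the conditions make `N` generated over
`R` by the finitely generated `R₀`-modules `N_t, …, N_s`, and `R` is Noetherian, being of finite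
type over `R₀`.
-/

open CategoryTheory Opposite

noncomputable section

universe u

theorem DirectSum.IsInternal.mem_of_mem_iSup_of_le {R₀ M ι : Type*} [Ring R₀] [AddCommGroup M]
    [Module R₀ M] [DecidableEq ι] {ℳ P : ι → Submodule R₀ M} (h : DirectSum.IsInternal ℳ)
    (hP : ∀ i, P i ≤ ℳ i) {k : ι} {x : M} (hx : x ∈ ℳ k) (hxP : x ∈ ⨆ i, P i) : x ∈ P k := by
  rw [iSup_split_single P k, Submodule.mem_sup] at hxP
  obtain ⟨p, hp, q, hq, rfl⟩ := hxP
  have hq_zero : q = 0 := by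
    refine Submodule.disjoint_def.mp (h.submodule_iSupIndep k) q ?_
      (iSup₂_mono (fun i _ => hP i) hq)
    simpa using Submodule.sub_mem _ hx (hP k hp)
  simpa [hq_zero] using hp

namespace Paper

section StdGraded

variable {R₀ R : Type u} [CommRing R₀] [CommRing R] [Algebra R₀ R] {𝒜 : ℕ → Submodule R₀ R}

theorem pow_grade_one_le [SetLike.GradedMonoid 𝒜] (k : ℕ) : 𝒜 1 ^ k ≤ 𝒜 k := by
  induction k with
  | zero => exact Submodule.one_le.mpr SetLike.GradedOne.one_mem
  | succ k ih =>
    rw [pow_succ]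
    exact Submodule.mul_le.mpr fun a ha b hb => SetLike.mul_mem_graded (ih ha) hb

namespace IsStdGraded

theorem isNoetherianRing [IsNoetherianRing R₀] (hstd : IsStdGraded R₀ R 𝒜) :
    IsNoetherianRing R := by
  obtain ⟨S, hS⟩ := hstd.fg_one
  have : Algebra.FiniteType R₀ R :=
    ⟨⟨S, by rw [← Algebra.adjoin_span, hS, hstd.adjoin_one]⟩⟩
  exact Algebra.FiniteType.isNoetherianRing R₀ R

theorem iSup_pow_eq_top (hstd : IsStdGraded R₀ R 𝒜) : ⨆ k, 𝒜 1 ^ k = ⊤ := by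
  rw [eq_top_iff]
  rintro x -
  have hx : x ∈ Algebra.adjoin R₀ (𝒜 1 : Set R) := hstd.adjoin_one ▸ Algebra.mem_top
  induction hx using Algebra.adjoin_induction with
  | mem x hx => exact Submodule.mem_iSup_of_mem 1 (by rwa [pow_one])
  | algebraMap c => exact Submodule.mem_iSup_of_mem 0 (by simp [Submodule.algebraMap_mem c])
  | add x y _ _ hx hy => exact add_mem hx hy
  | mul x y _ _ hx hy =>
    have hmul : (⨆ i, 𝒜 1 ^ i) * (⨆ j, 𝒜 1 ^ j) ≤ ⨆ k, 𝒜 1 ^ k := by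
      simp only [Submodule.iSup_mul, Submodule.mul_iSup, ← pow_add]
      exact iSup₂_le fun i j => le_iSup (fun k => 𝒜 1 ^ k) (j + i)
    exact hmul (Submodule.mul_mem_mul hx hy)

theorem grade_eq_pow [GradedAlgebra 𝒜] (hstd : IsStdGraded R₀ R 𝒜) (k : ℕ) : 𝒜 k = 𝒜 1 ^ k := by
  refine le_antisymm (fun x hx => ?_) (pow_grade_one_le k)
  exact (DirectSum.Decomposition.isInternal 𝒜).mem_of_mem_iSup_of_le pow_grade_one_le hx
    (hstd.iSup_pow_eq_top ▸ Submodule.mem_top)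

theorem smul_mem_of_mem_grade_zero {N : Type*} [AddCommGroup N] [Module R₀ N] [Module R N]
    [IsScalarTower R₀ R N] (hstd : IsStdGraded R₀ R 𝒜) {p : Submodule R₀ N} {r : R} {y : N}
    (hr : r ∈ 𝒜 0) (hy : y ∈ p) : r • y ∈ p := by
  rw [hstd.degree_zero] at hr
  obtain ⟨c, rfl⟩ := hr
  rw [Algebra.linearMap_apply, algebraMap_smul]
  exact p.smul_mem c hy

end IsStdGraded

end StdGraded

section GradedModule

variable {R₀ R N : Type u} [CommRing R₀] [CommRing R] [Algebra R₀ R] {𝒜 : ℕ → Submodule R₀ R}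
  [AddCommGroup N] [Module R₀ N] [Module R N] {𝒩 : ℤ → Submodule R₀ N}

def GradedSMulClosed (𝒜 : ℕ → Submodule R₀ R) (Q : ℤ → Submodule R₀ N) : Prop :=
  ∀ (i : ℕ) (n : ℤ) (r : R) (m : N), r ∈ 𝒜 i → m ∈ Q n → r • m ∈ Q (n + (i : ℤ))

/-- `R₁ · Nₙ`, as an `R₀`-submodule of `N`. -/
def gradeOneSMul (𝒜 : ℕ → Submodule R₀ R) (𝒩 : ℤ → Submodule R₀ N) (n : ℤ) : Submodule R₀ N :=
  Submodule.span R₀ {m : N | ∃ r ∈ 𝒜 1, ∃ x ∈ 𝒩 n, m = r • x}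

namespace GradedSMulClosed

variable {Q : ℤ → Submodule R₀ N}

theorem span [IsScalarTower R₀ R N] {S : ℤ → Set N}
    (hS : ∀ (i : ℕ) (n : ℤ) (r : R) (m : N), r ∈ 𝒜 i → m ∈ S n →
      r • m ∈ Submodule.span R₀ (S (n + (i : ℤ)))) :
    GradedSMulClosed 𝒜 fun n => Submodule.span R₀ (S n) := by
  intro i n r m hr hm
  induction hm using Submodule.span_induction with
  | mem m hm => exact hS i n r m hr hm
  | zero => simp
  | add x y _ _ hx hy => simpa only [smul_add] using add_mem hx hy
  | smul c x _ hx => simpa only [smul_comm r c x] using Submodule.smul_mem _ c hx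

theorem smul_mem_iSup [GradedAlgebra 𝒜] (hQ : GradedSMulClosed 𝒜 Q) (r : R) {y : N}
    (hy : y ∈ ⨆ n, Q n) : r • y ∈ ⨆ n, Q n := by
  classical
  induction hy using Submodule.iSup_induction' with
  | mem n y hy =>
    rw [← DirectSum.sum_support_decompose 𝒜 r, Finset.sum_smul]
    exact sum_mem fun i _ => Submodule.mem_iSup_of_mem _ (hQ i n _ y (SetLike.coe_mem _) hy)
  | zero => simp
  | add x y _ _ hx hy => simpa only [smul_add] using add_mem hx hy

theorem span_le_iSup [GradedAlgebra 𝒜] [IsScalarTower R₀ R N] (hQ : GradedSMulClosed 𝒜 Q)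
    {G : Set N} (hG : G ⊆ ↑(⨆ n, Q n)) : (Submodule.span R G).restrictScalars R₀ ≤ ⨆ n, Q n := by
  intro x hx
  induction hx using Submodule.span_induction with
  | mem x hx => exact hG hx
  | zero => exact zero_mem _
  | add x y _ _ hx hy => exact add_mem hx hy
  | smul r x _ hx => exact hQ.smul_mem_iSup r hx

end GradedSMulClosed

namespace IsGradedMod

variable [IsScalarTower R₀ R N]

theorem mem_of_mem_span [GradedAlgebra 𝒜] (hN : IsGradedMod R 𝒜 N 𝒩) {Q : ℤ → Submodule R₀ N}
    (hQ𝒩 : ∀ n, Q n ≤ 𝒩 n) (hQ : GradedSMulClosed 𝒜 Q) {G : Set N} (hG : G ⊆ ↑(⨆ n, Q n))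
    {k : ℤ} {x : N} (hx : x ∈ 𝒩 k) (hxG : x ∈ Submodule.span R G) : x ∈ Q k :=
  hN.internal.mem_of_mem_iSup_of_le hQ𝒩 hx (hQ.span_le_iSup hG hxG)

theorem gradeOneSMul_le (hN : IsGradedMod R 𝒜 N 𝒩) (n : ℤ) :
    gradeOneSMul 𝒜 𝒩 n ≤ 𝒩 (n + 1) :=
  Submodule.span_le.mpr fun _ ⟨r, hr, x, hx, hm⟩ => hm ▸ hN.smul_mem 1 n r x hr hx

theorem smul_mem_gradeOneSMul [GradedAlgebra 𝒜] (hstd : IsStdGraded R₀ R 𝒜)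
    (hN : IsGradedMod R 𝒜 N 𝒩) {j : ℕ} {n : ℤ} {r : R} {y : N} (hr : r ∈ 𝒜 (j + 1))
    (hy : y ∈ 𝒩 n) : r • y ∈ gradeOneSMul 𝒜 𝒩 (n + j) := by
  rw [hstd.grade_eq_pow, pow_succ', ← hstd.grade_eq_pow] at hr
  induction hr using Submodule.mul_induction_on' with
  | mem_mul_mem a ha b hb =>
    rw [mul_smul]
    exact Submodule.subset_span ⟨a, ha, b • y, hN.smul_mem j n b y hb hy, rfl⟩
  | add a b _ _ ha hb => simpa only [add_smul] using add_mem ha hb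

theorem span_iUnion_eq_top (hN : IsGradedMod R 𝒜 N 𝒩) :
    Submodule.span R (⋃ n, (𝒩 n : Set N)) = ⊤ := by
  rw [eq_top_iff, ← Submodule.restrictScalars_le R₀, Submodule.restrictScalars_top,
    ← hN.internal.submodule_iSup_eq_top, Submodule.iSup_eq_span]
  exact Submodule.span_le_restrictScalars R₀ R _

theorem exists_span_iUnion_Icc_eq_top [Module.Finite R N] (hN : IsGradedMod R 𝒜 N 𝒩) :
    ∃ t s : ℤ, t ≤ s ∧ Submodule.span R (⋃ n ∈ Set.Icc t s, (𝒩 n : Set N)) = ⊤ := by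
  have htop := hN.span_iUnion_eq_top
  rw [Submodule.span_iUnion] at htop
  obtain ⟨F, hF⟩ := CompleteLattice.IsCompactElement.exists_finset_of_le_iSup _
    ((Submodule.fg_iff_compact ⊤).mp Module.Finite.fg_top) _ htop.ge
  obtain ⟨t, ht⟩ := F.bddBelow
  obtain ⟨s, hs⟩ := F.bddAbove
  refine ⟨t, max t s, le_max_left t s, top_unique (hF.trans ?_)⟩
  rw [Submodule.span_iUnion₂]
  exact biSup_mono fun n hn => ⟨ht hn, (hs hn).trans (le_max_right t s)⟩

theorem eq_bot_of_lt [GradedAlgebra 𝒜] (hN : IsGradedMod R 𝒜 N 𝒩) {t : ℤ}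
    (hgen : Submodule.span R (⋃ n ∈ Set.Ici t, (𝒩 n : Set N)) = ⊤) {n : ℤ} (hn : n < t) :
    𝒩 n = ⊥ := by
  let Q : ℤ → Submodule R₀ N := fun m => if t ≤ m then 𝒩 m else ⊥
  have hQ𝒩 : ∀ m, Q m ≤ 𝒩 m := fun m => by
    by_cases h : t ≤ m <;> simp [Q, h]
  have hQ : GradedSMulClosed 𝒜 Q := fun i m r y hr hy => by
    by_cases h : t ≤ m
    · have h' : t ≤ m + i := h.trans (by omega)
      simp only [Q, h, h', if_true] at hy ⊢
      exact hN.smul_mem i m r y hr hy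
    · simp_all [Q]
  have hG : (⋃ m ∈ Set.Ici t, (𝒩 m : Set N)) ⊆ ↑(⨆ m, Q m) := by
    refine Set.iUnion₂_subset fun m hm y hy => Submodule.mem_iSup_of_mem m ?_
    simpa [Q, Set.mem_Ici.mp hm] using hy
  refine eq_bot_iff.mpr fun x hx => ?_
  simpa [Q, not_le.mpr hn] using hN.mem_of_mem_span hQ𝒩 hQ hG hx (hgen ▸ Submodule.mem_top)

theorem grade_succ_eq [GradedAlgebra 𝒜] (hstd : IsStdGraded R₀ R 𝒜) (hN : IsGradedMod R 𝒜 N 𝒩)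
    {s : ℤ} (hgen : Submodule.span R (⋃ n ∈ Set.Iic s, (𝒩 n : Set N)) = ⊤) {n : ℤ}
    (hn : s ≤ n) : 𝒩 (n + 1) = gradeOneSMul 𝒜 𝒩 n := by
  let Q : ℤ → Submodule R₀ N := fun m => if m ≤ s then 𝒩 m else gradeOneSMul 𝒜 𝒩 (m - 1)
  have hQ𝒩 : ∀ m, Q m ≤ 𝒩 m := fun m => by
    by_cases h : m ≤ s
    · simp [Q, h]
    · simpa [Q, h] using hN.gradeOneSMul_le (m - 1)
  have hQ : GradedSMulClosed 𝒜 Q := by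
    rintro (_ | j) m r y hr hy
    · simpa using hstd.smul_mem_of_mem_grade_zero hr hy
    · by_cases h : m + (j + 1 : ℕ) ≤ s
      · simp only [Q, h, if_true]
        exact hN.smul_mem _ m r y hr (hQ𝒩 m hy)
      · simp only [Q, h, if_false]
        convert hN.smul_mem_gradeOneSMul hstd hr (hQ𝒩 m hy) using 2
        push_cast
        ring
  have hG : (⋃ m ∈ Set.Iic s, (𝒩 m : Set N)) ⊆ ↑(⨆ m, Q m) := by
    refine Set.iUnion₂_subset fun m hm y hy => Submodule.mem_iSup_of_mem m ?_
    simpa [Q, Set.mem_Iic.mp hm] using hy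
  refine le_antisymm (fun x hx => ?_) (hN.gradeOneSMul_le n)
  have hxQ := hN.mem_of_mem_span hQ𝒩 hQ hG hx (hgen ▸ Submodule.mem_top)
  simpa [Q, show ¬ n + 1 ≤ s by omega] using hxQ

theorem fg_grade [GradedAlgebra 𝒜] [IsNoetherian R N] (hstd : IsStdGraded R₀ R 𝒜)
    (hN : IsGradedMod R 𝒜 N 𝒩) (n : ℤ) : (𝒩 n).FG := by
  obtain ⟨T, hT𝒩, hTspan⟩ := (Submodule.fg_span_iff_fg_span_finset_subset _).mp
    (IsNoetherian.noetherian (Submodule.span R (𝒩 n : Set N)))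
  let S : ℤ → Set N := fun m => {y | ∃ i : ℕ, m = n + i ∧ ∃ a ∈ 𝒜 i, ∃ x ∈ T, y = a • x}
  let Q : ℤ → Submodule R₀ N := fun m => Submodule.span R₀ (S m)
  have hQ𝒩 : ∀ m, Q m ≤ 𝒩 m := fun m => Submodule.span_le.mpr <| by
    rintro _ ⟨i, rfl, a, ha, x, hx, rfl⟩
    exact hN.smul_mem i n a x ha (hT𝒩 hx)
  have hQ : GradedSMulClosed 𝒜 Q := GradedSMulClosed.span <| by
    rintro i m r _ hr ⟨j, rfl, a, ha, x, hx, rfl⟩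
    refine Submodule.subset_span ⟨j + i, by push_cast; ring, a * r, ?_, x, hx, ?_⟩
    · exact SetLike.mul_mem_graded ha hr
    · rw [mul_comm, mul_smul]
  have hG : (T : Set N) ⊆ ↑(⨆ m, Q m) := fun x hx => Submodule.mem_iSup_of_mem n <|
    Submodule.subset_span ⟨0, by simp, 1, SetLike.one_mem_graded 𝒜, x, hx, (one_smul R x).symm⟩
  have hQn : Q n ≤ Submodule.span R₀ T := Submodule.span_le.mpr <| by
    rintro _ ⟨i, hi, a, ha, x, hx, rfl⟩
    obtain rfl : i = 0 := by omega
    exact hstd.smul_mem_of_mem_grade_zero ha (Submodule.subset_span hx)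
  refine ⟨T, le_antisymm (Submodule.span_le.mpr hT𝒩) fun x hx => hQn ?_⟩
  exact hN.mem_of_mem_span hQ𝒩 hQ hG hx (hTspan.le (Submodule.subset_span hx))

theorem span_iUnion_Icc_eq_top (hN : IsGradedMod R 𝒜 N 𝒩) {t s : ℤ} (hts : t ≤ s)
    (hbot : ∀ n < t, 𝒩 n = ⊥) (hstep : ∀ n, s ≤ n → 𝒩 (n + 1) = gradeOneSMul 𝒜 𝒩 n) :
    Submodule.span R (⋃ n ∈ Set.Icc t s, (𝒩 n : Set N)) = ⊤ := by
  set P := Submodule.span R (⋃ n ∈ Set.Icc t s, (𝒩 n : Set N))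
  have hmid : ∀ n ∈ Set.Icc t s, 𝒩 n ≤ P.restrictScalars R₀ := fun n hn x hx =>
    Submodule.subset_span (Set.mem_biUnion hn hx)
  have hlarge : ∀ n, s ≤ n → 𝒩 n ≤ P.restrictScalars R₀ := by
    intro n hn
    induction n, hn using Int.leInduction with
    | base => exact hmid s ⟨hts, le_rfl⟩
    | succ n hn ih =>
      rw [hstep n hn]
      refine Submodule.span_le.mpr ?_
      rintro _ ⟨r, -, x, hx, rfl⟩
      exact P.smul_mem r (ih hx)
  have hall : ∀ n, 𝒩 n ≤ P.restrictScalars R₀ := by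
    intro n
    rcases lt_or_ge n t with hnt | htn
    · simp [hbot n hnt]
    rcases le_or_gt n s with hns | hsn
    · exact hmid n ⟨htn, hns⟩
    · exact hlarge n hsn.le
  rw [eq_top_iff, ← hN.span_iUnion_eq_top, Submodule.span_le]
  exact Set.iUnion_subset hall

end IsGradedMod

theorem fg_span_iUnion_Icc [IsScalarTower R₀ R N] {t s : ℤ}
    (hfg : ∀ n, t ≤ n → n ≤ s → (𝒩 n).FG) :
    (Submodule.span R (⋃ n ∈ Set.Icc t s, (𝒩 n : Set N))).FG := by
  rw [← Finset.coe_Icc, Submodule.span_iUnion₂]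
  exact Submodule.fg_biSup _ _ fun n hn =>
    (hfg n (Finset.mem_Icc.mp hn).1 (Finset.mem_Icc.mp hn).2).span

end GradedModule

/-- Kirby. A graded module `N` over a standard graded Noetherian ring `R` is
Noetherian if and only if there are integers `t ≤ s` such that `Nₙ = 0` for `n < t`,
`N_{n+1} = R₁ · Nₙ` for `n ≥ s`, and `Nₙ` is a finitely generated `R₀`-module for
`t ≤ n ≤ s`. -/
theorem statement5 (R₀ : Type u) [CommRing R₀] [IsNoetherianRing R₀]
    (R : Type u) [CommRing R] [Algebra R₀ R]
    (𝒜 : ℕ → Submodule R₀ R) [GradedAlgebra 𝒜] (hstd : IsStdGraded R₀ R 𝒜)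
    (N : Type u) [AddCommGroup N] [Module R₀ N] [Module R N] [IsScalarTower R₀ R N]
    (𝒩 : ℤ → Submodule R₀ N) (hN : IsGradedMod R 𝒜 N 𝒩) :
    IsNoetherian R N ↔
      ∃ t s : ℤ, t ≤ s ∧
        (∀ n : ℤ, n < t → 𝒩 n = ⊥) ∧
        (∀ n : ℤ, s ≤ n →
          𝒩 (n + 1) = Submodule.span R₀ {m : N | ∃ r ∈ 𝒜 1, ∃ x ∈ 𝒩 n, m = r • x}) ∧
        (∀ n : ℤ, t ≤ n → n ≤ s → (𝒩 n).FG) := by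
  have := hstd.isNoetherianRing
  constructor
  · intro _
    obtain ⟨t, s, hts, hgen⟩ := hN.exists_span_iUnion_Icc_eq_top
    have hgen_of_le : ∀ I : Set ℤ, Set.Icc t s ⊆ I →
        Submodule.span R (⋃ n ∈ I, (𝒩 n : Set N)) = ⊤ := fun I hI =>
      top_unique (hgen.ge.trans (Submodule.span_mono (Set.biUnion_subset_biUnion_left hI)))
    exact ⟨t, s, hts, fun _ => hN.eq_bot_of_lt (hgen_of_le _ fun _ h => h.1),
      fun _ => hN.grade_succ_eq hstd (hgen_of_le _ fun _ h => h.2), fun n _ _ => hN.fg_grade hstd n⟩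
  · rintro ⟨t, s, hts, hbot, hstep, hfg⟩
    have : Module.Finite R N :=
      ⟨hN.span_iUnion_Icc_eq_top hts hbot hstep ▸ fg_span_iUnion_Icc hfg⟩
    exact isNoetherian_of_isNoetherianRing_of_finite R N

end Paper
end
end

section
/- Let R be a standard graded Noetherian ring and N a graded R-module. Then N is an Artinian R-module if and only if there exist integers v ≤ u such that: N_n = 0 for all n > u; the annihilator of R₁ in N_n is zero for all n ≤ v (i.e., (0 :_{N_n} R₁) = 0); and N_n is an Artinian R₀-module for all v ≤ n ≤ u. -/
open CategoryTheory Opposite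

noncomputable section

universe u

/-!
Forward direction: the truncations `N_{≥k}` form a descending chain of `R`-submodules, so
`N_n = 0` for `n ≫ 0`. On an `R`-module killed by `R₁` the ring `R = R₀[R₁]` acts through `R₀`,
so such a module is Artinian over `R₀` once it is Artinian over `R`. This applies to the socle
`(0 :_N R₁)`, whose parts in degrees `≤ c` form a descending chain as `c → -∞`, which forces the
socle to vanish in low degrees; and to the part of `N / N_{>n}` killed by `R₁`, which contains
`N_n`.

Backward direction: the socle is graded and lives in degrees `[v, u]`, so it is an Artinian
`R₀`-module. Every `r ∈ R₁` raises degrees, hence is nilpotent on each element of `N`, and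
Melkersson's criterion (an `r`-power torsion module whose `r`-torsion is Artinian is Artinian),
applied to finitely many generators of `R₁`, shows that `N` is Artinian.
-/

open Submodule DirectSum
open scoped Pointwise

theorem Algebra.exists_sub_algebraMap_mem_span_of_adjoin_eq_top {R₀ R : Type*} [CommRing R₀]
    [CommRing R] [Algebra R₀ R] {s : Set R} (hs : Algebra.adjoin R₀ s = ⊤) (r : R) :
    ∃ a : R₀, r - algebraMap R₀ R a ∈ Ideal.span s := by
  have hr : r ∈ Algebra.adjoin R₀ s := hs ▸ trivial
  induction hr using Algebra.adjoin_induction with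
  | mem x hx => exact ⟨0, by simpa using Ideal.subset_span hx⟩
  | algebraMap a => exact ⟨a, by simp⟩
  | add x y _ _ hx hy =>
    obtain ⟨a, ha⟩ := hx
    obtain ⟨b, hb⟩ := hy
    exact ⟨a + b, by convert add_mem ha hb using 1; rw [map_add]; ring⟩
  | mul x y _ _ hx hy =>
    obtain ⟨a, ha⟩ := hx
    obtain ⟨b, hb⟩ := hy
    refine ⟨a * b, ?_⟩
    convert add_mem (Ideal.mul_mem_left _ x hb) (Ideal.mul_mem_right (algebraMap R₀ R b) _ ha)
      using 1
    rw [map_mul]; ring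

theorem isArtinian_of_forall_exists_smul_eq (R₀ : Type*) {R M : Type*} [CommSemiring R₀]
    [Semiring R] [Algebra R₀ R] [AddCommMonoid M] [Module R₀ M] [Module R M]
    [IsScalarTower R₀ R M] (h : ∀ r : R, ∃ a : R₀, ∀ x : M, r • x = a • x) [IsArtinian R M] :
    IsArtinian R₀ M := by
  let lift : Submodule R₀ M → Submodule R M := fun p =>
    { p with
      smul_mem' := fun r x hx => (h r).elim fun a ha => (ha x).symm ▸ p.smul_mem a hx }
  have hlift : StrictMono lift := fun p q hpq => hpq
  exact hlift.wellFoundedLT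

theorem isArtinian_torsionBySet_of_adjoin_eq_top (R₀ : Type*) {R M : Type*} [CommRing R₀]
    [CommRing R] [Algebra R₀ R] [AddCommGroup M] [Module R₀ M] [Module R M]
    [IsScalarTower R₀ R M] {s : Set R} (hs : Algebra.adjoin R₀ s = ⊤) [IsArtinian R M] :
    IsArtinian R₀ (torsionBySet R M s) := by
  refine isArtinian_of_forall_exists_smul_eq R₀ (R := R) fun r => ?_
  obtain ⟨a, ha⟩ := Algebra.exists_sub_algebraMap_mem_span_of_adjoin_eq_top hs r
  refine ⟨a, fun x => ?_⟩
  have hx : (r - algebraMap R₀ R a) • x = 0 := by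
    have hx : (x : M) ∈ torsionBySet R M (Ideal.span s) :=
      torsionBySet_eq_torsionBySet_span (M := M) s ▸ x.2
    exact Subtype.ext ((mem_torsionBySet_iff _ _).1 hx ⟨_, ha⟩)
  rw [sub_smul, sub_eq_zero, algebraMap_smul] at hx
  exact hx

theorem Submodule.torsionBySet_span_of_tower (R₀ : Type*) {R M : Type*} [CommSemiring R₀]
    [CommSemiring R] [Algebra R₀ R] [AddCommMonoid M] [Module R M] (s : Set R) :
    torsionBySet R M (span R₀ s) = torsionBySet R M s := by
  refine le_antisymm (torsionBySet_le_torsionBySet_of_subset subset_span) ?_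
  rw [torsionBySet_eq_torsionBySet_span]
  exact torsionBySet_le_torsionBySet_of_subset (span_le_restrictScalars R₀ R s)

theorem WellFoundedLT.antitone_chain_condition_of_forall_antitone {α : Type*} [PartialOrder α]
    [WellFoundedLT α] {f : ℕ → ℕ → α} (hf : Antitone f) (hfi : ∀ i, Antitone (f i)) :
    ∃ I, ∀ i, I ≤ i → f I = f i := by
  choose n hn using fun j => WellFoundedLT.antitone_chain_condition fun _ _ h => hf h j
  set g : ℕ → α := fun j => f (n j) j
  have hg_le : ∀ i j, g j ≤ f i j := fun i j =>
    calc g j = f (max i (n j)) j := hn j _ (le_max_right _ _)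
      _ ≤ f i j := hf (le_max_left _ _) j
  obtain ⟨J, hJ⟩ := WellFoundedLT.antitone_chain_condition (f := g) fun j j' h =>
    (hg_le (n j) j').trans (hfi _ h)
  set I := (Finset.range (J + 1)).sup n
  have hn_le : ∀ j ≤ J, n j ≤ I := fun j hj => Finset.le_sup (Finset.mem_range.2 (by omega))
  have hlim : ∀ i, I ≤ i → ∀ j, f i j = g j := by
    intro i hi j
    rcases le_or_gt j J with hj | hj
    · exact (hn j i ((hn_le j hj).trans hi)).symm
    · refine le_antisymm ?_ (hg_le i j)
      calc f i j ≤ f i J := hfi i hj.le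
        _ = g J := (hn J i ((hn_le J le_rfl).trans hi)).symm
        _ = g j := hJ j hj.le
  exact ⟨I, fun i hi => funext fun j => (hlim I le_rfl j).trans (hlim i hi j).symm⟩

section Melkersson

variable {A M : Type*} [CommRing A] [AddCommGroup M] [Module A M]

theorem Submodule.le_of_torsionBy_inf_pow_smul_le {r : A}
    (htor : ∀ x : M, ∃ m : ℕ, r ^ m • x = 0) {L L' : Submodule A M} (hLL' : L ≤ L')
    (h : ∀ j : ℕ, torsionBy A M r ⊓ r ^ j • L' ≤ r ^ j • L) : L' ≤ L := by
  suffices ∀ m : ℕ, ∀ x ∈ L', r ^ m • x = 0 → x ∈ L from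
    fun x hx => (htor x).elim fun m hm => this m x hx hm
  intro m
  induction m with
  | zero => intro x _ hx; simp_all
  | succ m ih =>
    intro x hx hx0
    have hmem : r ^ m • x ∈ torsionBy A M r ⊓ r ^ m • L' :=
      mem_inf.2 ⟨by rw [mem_torsionBy_iff, smul_smul, ← pow_succ', hx0],
        smul_mem_pointwise_smul _ _ _ hx⟩
    obtain ⟨z, hz, hzx⟩ := (mem_smul_pointwise_iff_exists _ _ _).1 (h m hmem)
    have hxz : x - z ∈ L := ih _ (sub_mem hx (hLL' hz)) (by rw [smul_sub, hzx, sub_self])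
    simpa using add_mem hxz hz

/-- A descending chain `N i` is controlled by the family `(0 :_M r) ∩ r ^ j • N i`, which is
antitone in both `i` and `j` and therefore stabilises uniformly in `j`. -/
theorem isArtinian_of_isArtinian_torsionBy {r : A} (htor : ∀ x : M, ∃ m : ℕ, r ^ m • x = 0)
    [IsArtinian A (torsionBy A M r)] : IsArtinian A M := by
  refine monotone_stabilizes_iff_artinian.1 fun N => ?_
  set T := torsionBy A M r
  let f : ℕ → ℕ → Submodule A T := fun i j => (r ^ j • N i).comap T.subtype
  have hf : Antitone f := fun i i' h j => comap_mono (smul_mono_right (r ^ j) (N.monotone h))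
  have hfi : ∀ i, Antitone (f i) := by
    intro i j j' h
    refine comap_mono ?_
    rw [← Nat.add_sub_cancel' h, pow_add, mul_smul]
    exact smul_mono_right (r ^ j) (smul_le_self_of_tower (r ^ (j' - j)) (N i))
  obtain ⟨I, hI⟩ := WellFoundedLT.antitone_chain_condition_of_forall_antitone hf hfi
  refine ⟨I, fun i hi => le_antisymm (N.monotone hi) ?_⟩
  refine le_of_torsionBy_inf_pow_smul_le htor (N.monotone hi) fun j x hx => ?_
  obtain ⟨hxT, hxN⟩ := mem_inf.1 hx
  have hx' : (⟨x, hxT⟩ : T) ∈ f I j := hxN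
  rw [hI i hi] at hx'
  exact hx'

theorem isArtinian_of_isArtinian_torsionBySet (s : Finset A)
    (htor : ∀ r ∈ s, ∀ x : M, ∃ m : ℕ, r ^ m • x = 0)
    [IsArtinian A (torsionBySet A M s)] : IsArtinian A M := by
  classical
  induction s using Finset.induction_on generalizing M with
  | empty =>
    have htop : torsionBySet A M ((∅ : Finset A) : Set A) = ⊤ := by ext; simp
    have : IsArtinian A (⊤ : Submodule A M) := htop ▸ ‹_›
    exact isArtinian_of_linearEquiv Submodule.topEquiv
  | insert r t _ ih =>
    set T := torsionBy A M r
    let ι : torsionBySet A T t →ₗ[A] torsionBySet A M (insert r t : Finset A) :=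
      (T.subtype ∘ₗ (torsionBySet A T t).subtype).codRestrict _ fun x => by
        rw [Finset.coe_insert, mem_torsionBySet_iff]
        rintro ⟨a, rfl | ha⟩
        · exact (x : T).2
        · exact congrArg Subtype.val ((mem_torsionBySet_iff _ _).1 x.2 ⟨a, ha⟩)
    have : IsArtinian A (torsionBySet A T t) := isArtinian_of_injective ι fun _ _ h =>
      Subtype.ext (Subtype.ext (congrArg Subtype.val h :))
    have : IsArtinian A T := ih (fun r' hr' x => (htor r' (Finset.mem_insert_of_mem hr') x).imp
      fun m hm => Subtype.ext hm)
    exact isArtinian_of_isArtinian_torsionBy (htor r (Finset.mem_insert_self r t))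

end Melkersson

namespace Paper.IsGradedMod

variable {R₀ R N : Type u} [CommRing R₀] [CommRing R] [Algebra R₀ R] {𝒜 : ℕ → Submodule R₀ R}
  [AddCommGroup N] [Module R₀ N] [Module R N] [IsScalarTower R₀ R N] {𝒩 : ℤ → Submodule R₀ N}

theorem smul_mem_add_one (hN : IsGradedMod R 𝒜 N 𝒩) {r : R} (hr : r ∈ 𝒜 1) {n : ℤ} {x : N}
    (hx : x ∈ 𝒩 n) : r • x ∈ 𝒩 (n + 1) := by
  simpa using hN.smul_mem 1 n r x hr hx

theorem pow_smul_mem [GradedAlgebra 𝒜] (hN : IsGradedMod R 𝒜 N 𝒩) {r : R} (hr : r ∈ 𝒜 1)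
    (m : ℕ) {n : ℤ} {x : N} (hx : x ∈ 𝒩 n) : r ^ m • x ∈ 𝒩 (n + m) := by
  simpa using hN.smul_mem m n _ x (by simpa using SetLike.pow_mem_graded m hr) hx

theorem smul_mem_biSup_Ici [GradedAlgebra 𝒜] (hN : IsGradedMod R 𝒜 N 𝒩) (k : ℤ) (r : R) {x : N}
    (hx : x ∈ ⨆ m ∈ Set.Ici k, 𝒩 m) : r • x ∈ ⨆ m ∈ Set.Ici k, 𝒩 m := by
  have hr : r ∈ ⨆ d, 𝒜 d := (Decomposition.isInternal 𝒜).submodule_iSup_eq_top ▸ trivial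
  refine iSup_induction 𝒜 (motive := fun r => r • x ∈ ⨆ m ∈ Set.Ici k, 𝒩 m) hr ?_ ?_ ?_
  · intro d r hr
    refine (iSup₂_le fun m hm y hy => ?_ :
      ⨆ m ∈ Set.Ici k, 𝒩 m ≤ (⨆ m ∈ Set.Ici k, 𝒩 m).comap (DistribSMul.toLinearMap R₀ N r)) hx
    have hkm : k ≤ m + d := (Set.mem_Ici.1 hm).trans (by omega)
    exact le_biSup 𝒩 (Set.mem_Ici.2 hkm) (hN.smul_mem d m r y hr hy)
  · simp
  · intro r s hr hs
    rw [add_smul]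
    exact add_mem hr hs

def geSubmodule [GradedAlgebra 𝒜] (hN : IsGradedMod R 𝒜 N 𝒩) (k : ℤ) : Submodule R N where
  toAddSubmonoid := (⨆ m ∈ Set.Ici k, 𝒩 m).toAddSubmonoid
  smul_mem' r _ hx := hN.smul_mem_biSup_Ici k r hx

theorem le_geSubmodule [GradedAlgebra 𝒜] (hN : IsGradedMod R 𝒜 N 𝒩) {k n : ℤ} (h : k ≤ n) :
    𝒩 n ≤ (hN.geSubmodule k).restrictScalars R₀ :=
  le_biSup 𝒩 (Set.mem_Ici.2 h)

theorem geSubmodule_anti [GradedAlgebra 𝒜] (hN : IsGradedMod R 𝒜 N 𝒩) :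
    Antitone hN.geSubmodule := fun k k' h _ hx =>
  (iSup₂_le fun _ hm => hN.le_geSubmodule (h.trans hm) :
    ⨆ m ∈ Set.Ici k', 𝒩 m ≤ (hN.geSubmodule k).restrictScalars R₀) hx

theorem disjoint_geSubmodule [GradedAlgebra 𝒜] (hN : IsGradedMod R 𝒜 N 𝒩) {n k : ℤ}
    (h : n < k) :
    Disjoint (𝒩 n) ((hN.geSubmodule k).restrictScalars R₀) :=
  hN.internal.submodule_iSupIndep.disjoint_biSup (Set.notMem_Ici.2 h)

theorem isArtinian_component [GradedAlgebra 𝒜] (hN : IsGradedMod R 𝒜 N 𝒩)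
    (hs : Algebra.adjoin R₀ (𝒜 1 : Set R) = ⊤) [IsArtinian R N] (n : ℤ) : IsArtinian R₀ (𝒩 n) := by
  set P := hN.geSubmodule (n + 1)
  have : IsArtinian R₀ (torsionBySet R (N ⧸ P) (𝒜 1)) :=
    isArtinian_torsionBySet_of_adjoin_eq_top R₀ hs
  let φ : 𝒩 n →ₗ[R₀] torsionBySet R (N ⧸ P) (𝒜 1) :=
    ((P.mkQ.restrictScalars R₀) ∘ₗ (𝒩 n).subtype).codRestrict
      ((torsionBySet R (N ⧸ P) (𝒜 1)).restrictScalars R₀) fun x =>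
      (mem_torsionBySet_iff _ _).2 fun r => by
        rw [LinearMap.comp_apply, LinearMap.restrictScalars_apply, ← map_smul, mkQ_apply,
          Quotient.mk_eq_zero]
        exact hN.le_geSubmodule le_rfl (hN.smul_mem_add_one r.2 x.2)
  refine isArtinian_of_injective φ ((injective_iff_map_eq_zero φ).2 fun x hx => ?_)
  have hxP : (x : N) ∈ P.restrictScalars R₀ := (Quotient.mk_eq_zero P).1 (congrArg Subtype.val hx)
  exact Subtype.ext (disjoint_def.1 (hN.disjoint_geSubmodule (lt_add_one n)) x x.2 hxP)

theorem exists_forall_lt_eq_bot [GradedAlgebra 𝒜] (hN : IsGradedMod R 𝒜 N 𝒩)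
    [IsArtinian R N] :
    ∃ u : ℤ, ∀ n, u < n → 𝒩 n = ⊥ := by
  obtain ⟨K, hK⟩ := WellFoundedLT.antitone_chain_condition (f := fun k : ℕ => hN.geSubmodule k)
    fun k k' h => hN.geSubmodule_anti (by exact_mod_cast h)
  refine ⟨K, fun n hn => ?_⟩
  lift n to ℕ using (by omega)
  have heq : hN.geSubmodule n = hN.geSubmodule (n + 1) := by
    simpa using (hK n (by omega)).symm.trans (hK (n + 1) (by omega))
  refine (hN.disjoint_geSubmodule (lt_add_one (n : ℤ))).eq_bot_of_le ?_
  rw [← heq]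
  exact hN.le_geSubmodule le_rfl

theorem exists_forall_le_eq_zero_of_forall_smul_eq_zero (hN : IsGradedMod R 𝒜 N 𝒩)
    (hs : Algebra.adjoin R₀ (𝒜 1 : Set R) = ⊤) [IsArtinian R N] :
    ∃ v : ℤ, ∀ n ≤ v, ∀ x ∈ 𝒩 n, (∀ r ∈ 𝒜 1, r • x = 0) → x = 0 := by
  set B := torsionBySet R N (𝒜 1)
  have : IsArtinian R₀ B := isArtinian_torsionBySet_of_adjoin_eq_top R₀ hs
  let W : ℕ → Submodule R₀ B := fun j =>
    (⨆ m ∈ Set.Iic (-(j : ℤ)), 𝒩 m).comap (B.subtype.restrictScalars R₀)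
  have hW : Antitone W := fun j j' h => comap_mono (biSup_mono fun m hm => by
    simp only [Set.mem_Iic] at hm ⊢; omega)
  obtain ⟨J, hJ⟩ := WellFoundedLT.antitone_chain_condition hW
  refine ⟨-J, fun n hn x hx hxB => ?_⟩
  lift -n to ℕ using (by omega) with j hj
  have hxB' : x ∈ B := (mem_torsionBySet_iff _ _).2 fun r => hxB r r.2
  have hxW : (⟨x, hxB'⟩ : B) ∈ W j := le_biSup 𝒩 (Set.mem_Iic.2 (by omega)) hx
  rw [← hJ j (by omega), hJ (j + 1) (by omega)] at hxW
  refine disjoint_def.1 (hN.internal.submodule_iSupIndep.disjoint_biSup ?_) x hx hxW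
  rw [Set.mem_Iic]
  omega

theorem decompose_smul_of_mem_one [Decomposition 𝒩] (hN : IsGradedMod R 𝒜 N 𝒩) {r : R}
    (hr : r ∈ 𝒜 1) (x : N) (n : ℤ) :
    (decompose 𝒩 (r • x) (n + 1) : N) = r • (decompose 𝒩 x n : N) := by
  induction x using Decomposition.inductionOn 𝒩 with
  | zero => simp
  | @homogeneous m y =>
    have hry : r • (y : N) ∈ 𝒩 (m + 1) := hN.smul_mem_add_one hr y.2
    by_cases h : m = n
    · subst h
      rw [decompose_of_mem_same 𝒩 hry, decompose_of_mem_same 𝒩 y.2]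
    · rw [decompose_of_mem_ne 𝒩 hry (by omega), decompose_of_mem_ne 𝒩 y.2 h, smul_zero]
  | add x y hx hy => simp [smul_add, hx, hy]

theorem exists_pow_smul_eq_zero [GradedAlgebra 𝒜] (hN : IsGradedMod R 𝒜 N 𝒩) {u : ℤ}
    (hu : ∀ n, u < n → 𝒩 n = ⊥) {r : R} (hr : r ∈ 𝒜 1) (x : N) : ∃ m : ℕ, r ^ m • x = 0 := by
  have hx : x ∈ ⨆ n, 𝒩 n := hN.internal.submodule_iSup_eq_top ▸ trivial
  obtain ⟨⟨_, m, rfl⟩, hm⟩ : x ∈ torsion' R N (Submonoid.powers r) := by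
    refine (iSup_le fun n y hy => ?_ :
      ⨆ n, 𝒩 n ≤ (torsion' R N (Submonoid.powers r)).restrictScalars R₀) hx
    refine ⟨⟨r ^ (u + 1 - n).toNat, _, rfl⟩, ?_⟩
    have := hN.pow_smul_mem hr (u + 1 - n).toNat hy
    rwa [hu _ (by omega), mem_bot] at this
  exact ⟨m, hm⟩

theorem isArtinian_torsionBySet (hN : IsGradedMod R 𝒜 N 𝒩) {v u : ℤ}
    (hu : ∀ n, u < n → 𝒩 n = ⊥)
    (hv : ∀ n ≤ v, ∀ x ∈ 𝒩 n, (∀ r ∈ 𝒜 1, r • x = 0) → x = 0)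
    (hart : ∀ n, v ≤ n → n ≤ u → IsArtinian R₀ (𝒩 n)) :
    IsArtinian R₀ (torsionBySet R N (𝒜 1)) := by
  let := hN.internal.chooseDecomposition
  set B := torsionBySet R N (𝒜 1)
  have hcomp : ∀ x ∈ B, ∀ n r, r ∈ 𝒜 1 → r • (decompose 𝒩 x n : N) = 0 := fun x hx n r hr => by
    rw [← hN.decompose_smul_of_mem_one hr, (mem_torsionBySet_iff _ _).1 hx ⟨r, hr⟩]
    simp
  have hzero : ∀ x ∈ B, ∀ n ∉ Finset.Icc v u, decompose 𝒩 x n = 0 := by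
    intro x hx n hn
    rw [Finset.mem_Icc, not_and_or, not_le, not_le] at hn
    rcases hn with hn | hn
    · exact Subtype.ext (hv n hn.le _ (decompose 𝒩 x n).2 (hcomp x hx n))
    · exact Subtype.ext ((mem_bot R₀).1 (hu n hn ▸ (decompose 𝒩 x n).2))
  have : ∀ n : Finset.Icc v u, IsArtinian R₀ (𝒩 n) := fun n =>
    hart n (Finset.mem_Icc.1 n.2).1 (Finset.mem_Icc.1 n.2).2
  let φ : B →ₗ[R₀] ∀ n : Finset.Icc v u, 𝒩 n := LinearMap.pi fun n =>
    DFinsupp.lapply (n : ℤ) ∘ₗ (decomposeLinearEquiv 𝒩).toLinearMap ∘ₗ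
      B.subtype.restrictScalars R₀
  refine isArtinian_of_injective φ ((injective_iff_map_eq_zero φ).2 fun x hx => ?_)
  have : decompose 𝒩 (x : N) = 0 := DFinsupp.ext fun n =>
    if hn : n ∈ Finset.Icc v u then congrFun hx ⟨n, hn⟩ else hzero x x.2 n hn
  exact Subtype.ext ((decompose 𝒩).injective (this.trans (decompose_zero 𝒩).symm))

end Paper.IsGradedMod

namespace Paper

theorem statement6_general (R₀ : Type u) [CommRing R₀]
    (R : Type u) [CommRing R] [Algebra R₀ R]
    (𝒜 : ℕ → Submodule R₀ R) [GradedAlgebra 𝒜] (hstd : IsStdGraded R₀ R 𝒜)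
    (N : Type u) [AddCommGroup N] [Module R₀ N] [Module R N] [IsScalarTower R₀ R N]
    (𝒩 : ℤ → Submodule R₀ N) (hN : IsGradedMod R 𝒜 N 𝒩) :
    IsArtinian R N ↔
      ∃ v u : ℤ, v ≤ u ∧
        (∀ n : ℤ, u < n → 𝒩 n = ⊥) ∧
        (∀ n : ℤ, n ≤ v → ∀ x ∈ 𝒩 n, (∀ r ∈ 𝒜 1, r • x = 0) → x = 0) ∧
        (∀ n : ℤ, v ≤ n → n ≤ u → IsArtinian R₀ ↥(𝒩 n)) := by
  constructor
  · intro _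
    obtain ⟨u, hu⟩ := hN.exists_forall_lt_eq_bot
    obtain ⟨v, hv⟩ := hN.exists_forall_le_eq_zero_of_forall_smul_eq_zero hstd.adjoin_one
    exact ⟨min v u, u, min_le_right v u, hu, fun n hn => hv n (hn.trans (min_le_left v u)),
      fun n _ _ => hN.isArtinian_component hstd.adjoin_one n⟩
  · rintro ⟨v, u, -, hu, hv, hart⟩
    obtain ⟨s, hs⟩ := hstd.fg_one
    have hB : torsionBySet R N (s : Set R) = torsionBySet R N (𝒜 1) :=
      hs ▸ (torsionBySet_span_of_tower R₀ _).symm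
    have : IsArtinian R (torsionBySet R N (s : Set R)) :=
      hB ▸ isArtinian_of_tower R₀ (hN.isArtinian_torsionBySet hu hv hart)
    exact isArtinian_of_isArtinian_torsionBySet s fun r hr =>
      hN.exists_pow_smul_eq_zero hu (hs ▸ subset_span hr)

/-- Kirby. A graded module `N` over a standard graded Noetherian ring `R` is
Artinian if and only if there are integers `v ≤ u` such that `Nₙ = 0` for `n > u`,
`(0 :_{Nₙ} R₁) = 0` for `n ≤ v`, and `Nₙ` is an Artinian `R₀`-module for `v ≤ n ≤ u`. -/
theorem statement6 (R₀ : Type u) [CommRing R₀] [IsNoetherianRing R₀]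
    (R : Type u) [CommRing R] [Algebra R₀ R]
    (𝒜 : ℕ → Submodule R₀ R) [GradedAlgebra 𝒜] (hstd : IsStdGraded R₀ R 𝒜)
    (N : Type u) [AddCommGroup N] [Module R₀ N] [Module R N] [IsScalarTower R₀ R N]
    (𝒩 : ℤ → Submodule R₀ N) (hN : IsGradedMod R 𝒜 N 𝒩) :
    IsArtinian R N ↔
      ∃ v u : ℤ, v ≤ u ∧
        (∀ n : ℤ, u < n → 𝒩 n = ⊥) ∧
        (∀ n : ℤ, n ≤ v → ∀ x ∈ 𝒩 n, (∀ r ∈ 𝒜 1, r • x = 0) → x = 0) ∧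
        (∀ n : ℤ, v ≤ n → n ≤ u → IsArtinian R₀ ↥(𝒩 n)) :=
  statement6_general R₀ R 𝒜 hstd N 𝒩 hN

end Paper
end
end
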